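/- arXiv:2111.10109 — 6 statements merged into one kernel-verified Lean document; each statement's English description precedes it below -/
import Mathlib

section
/- Let there be n units with binary potential treatment received D_i(0), D_i(1) ∈ {0,1} and binary potential outcomes Y_i(0), Y_i(1) ∈ {0,1}. Assume (i) exclusion restriction: Y_i(1) = Y_i(0) whenever D_i(1) = D_i(0), and (ii) monotonicity: D_i(1) ≥ D_i(0) for all i. Let C = {i : D_i(1) = 1 and D_i(0) = 0} be the set of compliers, with |C| = n_c > 0. Then the intention-to-treat effect on Y equals the complier average treatment effect times the complier proportion: (1/n)∑_{i=1}^n (Y_i(1) − Y_i(0)) = [(1/n_c)∑_{i∈C}(Y_i(1) − Y_i(0))] · (n_c/n). -/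
open Finset

/-- ITT effect on Y equals CATE times complier proportion. -/
theorem itt_eq_cate_mul_prop (n : ℕ) (hn : 0 < n)
    (Y1 Y0 D1 D0 : Fin n → ℝ)
    (hY1 : ∀ i, Y1 i = 0 ∨ Y1 i = 1) (hY0 : ∀ i, Y0 i = 0 ∨ Y0 i = 1)
    (hD1 : ∀ i, D1 i = 0 ∨ D1 i = 1) (hD0 : ∀ i, D0 i = 0 ∨ D0 i = 1)
    (hexcl : ∀ i, D1 i = D0 i → Y1 i = Y0 i)
    (hmono : ∀ i, D0 i ≤ D1 i)
    (C : Finset (Fin n)) (hC : ∀ i, i ∈ C ↔ (D1 i = 1 ∧ D0 i = 0))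
    (hnc : 0 < C.card) :
    (1 / (n : ℝ)) * ∑ i, (Y1 i - Y0 i)
      = ((1 / (C.card : ℝ)) * ∑ i ∈ C, (Y1 i - Y0 i)) * ((C.card : ℝ) / (n : ℝ)) := by
  have hsum : ∑ i, (Y1 i - Y0 i) = ∑ i ∈ C, (Y1 i - Y0 i) := by
    refine (Finset.sum_subset (Finset.subset_univ C) ?_).symm
    intro i _ hi
    have h := (hC i).not.mp hi
    have hD : D1 i = D0 i := by
      rcases hD1 i with h1 | h1 <;> rcases hD0 i with h0 | h0
      · rw [h1, h0]
      · exfalso; have := hmono i; rw [h1, h0] at this; linarith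
      · exact absurd ⟨h1, h0⟩ h
      · rw [h1, h0]
    rw [hexcl i hD]; ring
  have hc : (C.card : ℝ) ≠ 0 := by positivity
  rw [hsum]; field_simp
end

section
/- Under the exclusion restriction, monotonicity, and strong instrument assumption (τ_D > 0), the complier average treatment effect is identified as the ratio of intention-to-treat effects: τ = τ_Y / τ_D, where τ_Y = (1/n)∑_i (Y_i(1) − Y_i(0)) and τ_D = (1/n)∑_i (D_i(1) − D_i(0)). -/
open Finset

/-- Identification of the complier average treatment effect: τ = τ_Y / τ_D. -/
theorem cate_identification (n : ℕ) (hn : 0 < n)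
    (Y1 Y0 D1 D0 : Fin n → ℝ)
    (hY1 : ∀ i, Y1 i = 0 ∨ Y1 i = 1) (hY0 : ∀ i, Y0 i = 0 ∨ Y0 i = 1)
    (hD1 : ∀ i, D1 i = 0 ∨ D1 i = 1) (hD0 : ∀ i, D0 i = 0 ∨ D0 i = 1)
    (hexcl : ∀ i, D1 i = D0 i → Y1 i = Y0 i)
    (hmono : ∀ i, D0 i ≤ D1 i)
    (C : Finset (Fin n)) (hC : ∀ i, i ∈ C ↔ (D1 i = 1 ∧ D0 i = 0))
    (hnc : 0 < C.card) :
    (1 / (C.card : ℝ)) * ∑ i ∈ C, (Y1 i - Y0 i)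
      = ((1 / (n : ℝ)) * ∑ i, (Y1 i - Y0 i)) / ((1 / (n : ℝ)) * ∑ i, (D1 i - D0 i)) := by
  have hDeq : ∀ i, i ∉ C → D1 i = D0 i := by
    intro i hi
    rcases hD1 i with h1 | h1 <;> rcases hD0 i with h0 | h0
    · rw [h1, h0]
    · exact absurd (hmono i) (by rw [h1, h0]; norm_num)
    · exact absurd ((hC i).2 ⟨h1, h0⟩) hi
    · rw [h1, h0]
  have hYsum : ∑ i, (Y1 i - Y0 i) = ∑ i ∈ C, (Y1 i - Y0 i) := by
    rw [← Finset.sum_subset (Finset.subset_univ C)]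
    intro i _ hi
    rw [hexcl i (hDeq i hi)]; ring
  have hDsum : ∑ i, (D1 i - D0 i) = (C.card : ℝ) := by
    rw [← Finset.sum_subset (Finset.subset_univ C)
      (fun i _ hi => by rw [hDeq i hi]; ring)]
    rw [Finset.card_eq_sum_ones C, Nat.cast_sum]
    exact Finset.sum_congr rfl fun i hi => by
      obtain ⟨h1, h0⟩ := (hC i).1 hi; rw [h1, h0]; norm_num
  have hcn : (C.card : ℝ) ≠ 0 := Nat.cast_ne_zero.2 hnc.ne'
  have hnn : (n : ℝ) ≠ 0 := Nat.cast_ne_zero.2 hn.ne'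
  rw [hYsum, hDsum]
  field_simp
end

section
/- Under exclusion restriction and monotonicity, letting G_i(z) = Y_i(z)·D_i(z) and H_i(z) = Y_i(z)·(1 − D_i(z)), the ITT effects satisfy: τ_G := (1/n)∑_i(G_i(1) − G_i(0)) = (1/n)∑_{i∈C} Y_i(1) and τ_H := (1/n)∑_i(H_i(1) − H_i(0)) = −(1/n)∑_{i∈C} Y_i(0), where C is the set of compliers. Consequently, if ∑_{i∈C} Y_i(0) ≠ 0 then the multiplicative complier average treatment effect τ_M = [∑_{i∈C} Y_i(1)]/[∑_{i∈C} Y_i(0)] equals −τ_G/τ_H. -/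
open Finset

/-- Identification of the multiplicative complier average treatment effect. -/
theorem mcate_identification (n : ℕ) (hn : 0 < n)
    (Y1 Y0 D1 D0 : Fin n → ℝ)
    (hY1 : ∀ i, Y1 i = 0 ∨ Y1 i = 1) (hY0 : ∀ i, Y0 i = 0 ∨ Y0 i = 1)
    (hD1 : ∀ i, D1 i = 0 ∨ D1 i = 1) (hD0 : ∀ i, D0 i = 0 ∨ D0 i = 1)
    (hexcl : ∀ i, D1 i = D0 i → Y1 i = Y0 i)
    (hmono : ∀ i, D0 i ≤ D1 i)
    (C : Finset (Fin n)) (hC : ∀ i, i ∈ C ↔ (D1 i = 1 ∧ D0 i = 0))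
    (tauG tauH : ℝ)
    (hG : tauG = (1 / (n : ℝ)) * ∑ i, (Y1 i * D1 i - Y0 i * D0 i))
    (hH : tauH = (1 / (n : ℝ)) * ∑ i, (Y1 i * (1 - D1 i) - Y0 i * (1 - D0 i))) :
    tauG = (1 / (n : ℝ)) * ∑ i ∈ C, Y1 i ∧
    tauH = -((1 / (n : ℝ)) * ∑ i ∈ C, Y0 i) ∧
    ((∑ i ∈ C, Y0 i) ≠ 0 →
      (∑ i ∈ C, Y1 i) / (∑ i ∈ C, Y0 i) = -(tauG / tauH)) := by
  have key : ∀ i, ¬ i ∈ C → D1 i = D0 i := by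
    intro i hi
    rcases hD1 i with h1 | h1 <;> rcases hD0 i with h0 | h0
    · rw [h1, h0]
    · exfalso; have := hmono i; rw [h1, h0] at this; linarith
    · exact absurd ((hC i).mpr ⟨h1, h0⟩) hi
    · rw [h1, h0]
  have hGsum : ∑ i, (Y1 i * D1 i - Y0 i * D0 i) = ∑ i ∈ C, Y1 i := by
    rw [← Finset.sum_subset (Finset.subset_univ C)]
    · exact Finset.sum_congr rfl fun i hi => by
        obtain ⟨h1, h0⟩ := (hC i).mp hi; rw [h1, h0]; ring
    · intro i _ hi
      rw [key i hi, hexcl i (key i hi)]; ring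
  have hHsum : ∑ i, (Y1 i * (1 - D1 i) - Y0 i * (1 - D0 i)) = -∑ i ∈ C, Y0 i := by
    rw [← Finset.sum_neg_distrib, ← Finset.sum_subset (Finset.subset_univ C)]
    · exact Finset.sum_congr rfl fun i hi => by
        obtain ⟨h1, h0⟩ := (hC i).mp hi; rw [h1, h0]; ring
    · intro i _ hi
      rw [key i hi, hexcl i (key i hi)]; ring
  have hnne : (n : ℝ) ≠ 0 := Nat.cast_ne_zero.mpr hn.ne'
  have hGe : tauG = (1 / (n : ℝ)) * ∑ i ∈ C, Y1 i := by rw [hG, hGsum]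
  have hHe : tauH = -((1 / (n : ℝ)) * ∑ i ∈ C, Y0 i) := by rw [hH, hHsum]; ring
  refine ⟨hGe, hHe, fun h0 => ?_⟩
  rw [hGe, hHe]
  field_simp
end

section
/- In a completely randomized experiment with n_1 treated and n_0 = n − n_1 control units, the variance of the difference-in-means estimator τ̂_R = (1/n_1)∑_{i:Z_i=1} R_i(1) − (1/n_0)∑_{i:Z_i=0} R_i(0) equals S²_{R(1)}/n_1 + S²_{R(0)}/n_0 − S²_{R(1)−R(0)}/n, where S²_{R(z)} = (1/(n−1))∑_i (R_i(z) − R̄(z))² and S²_{R(1)−R(0)} = (1/(n−1))∑_i (R_i(1) − R_i(0) − (R̄(1) − R̄(0)))². -/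
open Finset

/-- Finite-population mean. -/
noncomputable def fmean {n : ℕ} (v : Fin n → ℝ) : ℝ := (1 / (n : ℝ)) * ∑ i, v i

/-- Finite-population variance (normalization 1/(n-1)). -/
noncomputable def fvar {n : ℕ} (v : Fin n → ℝ) : ℝ :=
  (1 / ((n : ℝ) - 1)) * ∑ i, (v i - fmean v) ^ 2

/-- Difference-in-means estimator given treated set S. -/
noncomputable def dimEst {n : ℕ} (n1 : ℕ) (R1 R0 : Fin n → ℝ) (S : Finset (Fin n)) : ℝ :=
  (1 / (n1 : ℝ)) * ∑ i ∈ S, R1 i - (1 / ((n - n1 : ℕ) : ℝ)) * ∑ i ∈ Sᶜ, R0 i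


open Finset
variable {α : Type*} [DecidableEq α]

lemma count1 (s : Finset α) (i : α) (hi : i ∈ s) (k : ℕ) :
    ((s.powersetCard (k+1)).filter (fun S => i ∈ S)).card
      = ((s.erase i).powersetCard k).card := by
  refine Finset.card_nbij' (fun S => S.erase i) (fun T => insert i T) ?_ ?_ ?_ ?_
  · intro S hS
    simp only [mem_coe, mem_filter, mem_powersetCard] at hS
    obtain ⟨⟨hsub, hcard⟩, hiS⟩ := hS
    rw [mem_coe, mem_powersetCard]
    refine ⟨fun x hx => ?_, ?_⟩
    · rw [mem_erase] at hx ⊢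
      exact ⟨hx.1, hsub hx.2⟩
    · rw [card_erase_of_mem hiS, hcard]; omega
  · intro T hT
    rw [mem_coe, mem_powersetCard] at hT
    have hiT : i ∉ T := fun h => (mem_erase.1 (hT.1 h)).1 rfl
    rw [mem_coe, mem_filter, mem_powersetCard]
    refine ⟨⟨fun x hx => ?_, ?_⟩, mem_insert_self _ _⟩
    · rcases mem_insert.1 hx with rfl | hx
      · exact hi
      · exact (mem_erase.1 (hT.1 hx)).2
    · rw [card_insert_of_notMem hiT, hT.2]
  · intro S hS
    rw [mem_coe, mem_filter] at hS
    exact insert_erase hS.2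
  · intro T hT
    rw [mem_coe, mem_powersetCard] at hT
    have hiT : i ∉ T := fun h => (mem_erase.1 (hT.1 h)).1 rfl
    exact erase_insert hiT

lemma pair_count (s : Finset α) (i j : α) (hi : i ∈ s) (hj : j ∈ s) (hij : i ≠ j) (k : ℕ) :
    ((s.powersetCard (k+2)).filter (fun S => i ∈ S ∧ j ∈ S)).card
      = (((s.erase i).erase j).powersetCard k).card := by
  refine Finset.card_nbij' (fun S => (S.erase i).erase j) (fun T => insert i (insert j T)) ?_ ?_ ?_ ?_
  · intro S hS
    simp only [mem_coe, mem_filter, mem_powersetCard] at hS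
    obtain ⟨⟨hsub, hcard⟩, hiS, hjS⟩ := hS
    rw [mem_coe, mem_powersetCard]
    refine ⟨fun x hx => ?_, ?_⟩
    · simp only [mem_erase] at hx ⊢
      exact ⟨hx.1, hx.2.1, hsub hx.2.2⟩
    · rw [card_erase_of_mem (by rw [mem_erase]; exact ⟨hij.symm, hjS⟩),
        card_erase_of_mem hiS, hcard]; omega
  · intro T hT
    rw [mem_coe, mem_powersetCard] at hT
    have hiT : i ∉ T := fun h => by
      have := hT.1 h; simp only [mem_erase] at this; exact this.2.1 rfl
    have hjT : j ∉ T := fun h => by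
      have := hT.1 h; simp only [mem_erase] at this; exact this.1 rfl
    rw [mem_coe, mem_filter, mem_powersetCard]
    refine ⟨⟨fun x hx => ?_, ?_⟩, mem_insert_self _ _, mem_insert_of_mem (mem_insert_self _ _)⟩
    · rcases mem_insert.1 hx with rfl | hx
      · exact hi
      · rcases mem_insert.1 hx with rfl | hx
        · exact hj
        · have := hT.1 hx; simp only [mem_erase] at this; exact this.2.2
    · rw [card_insert_of_notMem, card_insert_of_notMem hjT, hT.2]
      rw [mem_insert]
      push_neg
      exact ⟨hij, hiT⟩
  · intro S hS
    simp only [mem_coe, mem_filter] at hS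
    obtain ⟨_, hiS, hjS⟩ := hS
    show insert i (insert j ((S.erase i).erase j)) = S
    rw [insert_erase (by rw [mem_erase]; exact ⟨hij.symm, hjS⟩), insert_erase hiS]
  · intro T hT
    rw [mem_coe, mem_powersetCard] at hT
    have hiT : i ∉ T := fun h => by
      have := hT.1 h; simp only [mem_erase] at this; exact this.2.1 rfl
    have hjT : j ∉ T := fun h => by
      have := hT.1 h; simp only [mem_erase] at this; exact this.1 rfl
    show ((insert i (insert j T)).erase i).erase j = T
    rw [Finset.erase_insert (by rw [mem_insert]; push_neg; exact ⟨hij, hiT⟩),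
      Finset.erase_insert hjT]


lemma sum_ite_mem_sum {n : ℕ} (a : Fin n → ℝ) (S : Finset (Fin n)) :
    ∑ i ∈ S, a i = ∑ i : Fin n, if i ∈ S then a i else 0 := by
  rw [Finset.sum_ite_mem, univ_inter]

lemma sum1 {n : ℕ} (k : ℕ) (a : Fin n → ℝ) :
    ∑ S ∈ (univ : Finset (Fin n)).powersetCard (k+1), ∑ i ∈ S, a i
      = ((n-1).choose k : ℝ) * ∑ i, a i := by
  have key : ∀ i : Fin n,
      (((univ : Finset (Fin n)).powersetCard (k+1)).filter (fun S => i ∈ S)).card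
        = (n-1).choose k := by
    intro i
    rw [count1 _ i (mem_univ i) k, card_powersetCard, card_erase_of_mem (mem_univ i), card_univ,
      Fintype.card_fin]
  calc ∑ S ∈ (univ : Finset (Fin n)).powersetCard (k+1), ∑ i ∈ S, a i
      = ∑ S ∈ (univ : Finset (Fin n)).powersetCard (k+1), ∑ i : Fin n,
          if i ∈ S then a i else 0 := by
        exact Finset.sum_congr rfl fun S _ => sum_ite_mem_sum a S
    _ = ∑ i : Fin n, ∑ S ∈ (univ : Finset (Fin n)).powersetCard (k+1),
          if i ∈ S then a i else 0 := Finset.sum_comm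
    _ = ∑ i : Fin n, ((n-1).choose k : ℝ) * a i := by
        refine Finset.sum_congr rfl fun i _ => ?_
        rw [Finset.sum_ite, Finset.sum_const, Finset.sum_const_zero, add_zero, key,
          nsmul_eq_mul]
    _ = ((n-1).choose k : ℝ) * ∑ i, a i := by rw [Finset.mul_sum]



def c2v (n n1 : ℕ) : ℕ := if 2 ≤ n1 then (n-2).choose (n1-2) else 0

lemma pair_count_univ {n : ℕ} (n1 : ℕ) (h1 : 0 < n1) (i j : Fin n) (hij : i ≠ j) :
    (((univ : Finset (Fin n)).powersetCard n1).filter (fun S => i ∈ S ∧ j ∈ S)).card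
      = c2v n n1 := by
  rcases le_or_gt 2 n1 with h | h
  · obtain ⟨k, rfl⟩ : ∃ k, n1 = k + 2 := ⟨n1 - 2, by omega⟩
    rw [c2v, if_pos h]
    rw [pair_count _ i j (mem_univ i) (mem_univ j) hij k, card_powersetCard,
      card_erase_of_mem (mem_erase.2 ⟨hij.symm, mem_univ j⟩),
      card_erase_of_mem (mem_univ i), card_univ, Fintype.card_fin]
    congr 1
  · have hn1 : n1 = 1 := by omega
    rw [c2v, if_neg (by omega)]
    rw [Finset.card_eq_zero, Finset.filter_eq_empty_iff]
    intro S hS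
    rw [mem_powersetCard] at hS
    rintro ⟨hiS, hjS⟩
    have hsub : ({i, j} : Finset (Fin n)) ⊆ S := by
      intro x hx
      rcases mem_insert.1 hx with rfl | hx
      · exact hiS
      · rw [mem_singleton] at hx; subst hx; exact hjS
    have := Finset.card_le_card hsub
    rw [Finset.card_pair hij, hS.2, hn1] at this
    omega

lemma sum2 {n : ℕ} (n1 : ℕ) (h1 : 0 < n1) (a : Fin n → ℝ) :
    ∑ S ∈ (univ : Finset (Fin n)).powersetCard n1, (∑ i ∈ S, a i) ^ 2
      = ((n-1).choose (n1-1) : ℝ) * ∑ i, (a i)^2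
        + (c2v n n1 : ℝ) * ((∑ i, a i)^2 - ∑ i, (a i)^2) := by
  have diag : ∀ i : Fin n,
      (((univ : Finset (Fin n)).powersetCard n1).filter (fun S => i ∈ S ∧ i ∈ S)).card
        = (n-1).choose (n1-1) := by
    intro i
    obtain ⟨k, rfl⟩ : ∃ k, n1 = k + 1 := ⟨n1 - 1, by omega⟩
    simp only [and_self]
    rw [count1 _ i (mem_univ i) k, card_powersetCard,
      card_erase_of_mem (mem_univ i), card_univ, Fintype.card_fin]
    congr 1
  calc ∑ S ∈ (univ : Finset (Fin n)).powersetCard n1, (∑ i ∈ S, a i) ^ 2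
      = ∑ S ∈ (univ : Finset (Fin n)).powersetCard n1,
          ∑ i : Fin n, ∑ j : Fin n, (if i ∈ S ∧ j ∈ S then a i * a j else 0) := by
        refine Finset.sum_congr rfl fun S _ => ?_
        rw [sq, sum_ite_mem_sum a S, Finset.sum_mul_sum]
        refine Finset.sum_congr rfl fun i _ => Finset.sum_congr rfl fun j _ => ?_
        by_cases h1 : i ∈ S <;> by_cases h2 : j ∈ S <;> simp [h1, h2]
    _ = ∑ i : Fin n, ∑ j : Fin n,
          ((((univ : Finset (Fin n)).powersetCard n1).filter
            (fun S => i ∈ S ∧ j ∈ S)).card : ℝ) * (a i * a j) := by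
        rw [Finset.sum_comm]
        refine Finset.sum_congr rfl fun i _ => ?_
        rw [Finset.sum_comm]
        refine Finset.sum_congr rfl fun j _ => ?_
        rw [Finset.sum_ite, Finset.sum_const, Finset.sum_const_zero, add_zero, nsmul_eq_mul]
    _ = ∑ i : Fin n, (((n-1).choose (n1-1) : ℝ) * (a i)^2
          + ∑ j ∈ univ.erase i, (c2v n n1 : ℝ) * (a i * a j)) := by
        refine Finset.sum_congr rfl fun i _ => ?_
        rw [← Finset.add_sum_erase _ _ (mem_univ i), diag i]
        congr 1
        · rw [sq]
        · refine Finset.sum_congr rfl fun j hj => ?_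
          rw [pair_count_univ n1 h1 i j (Ne.symm (mem_erase.1 hj).1)]
    _ = ((n-1).choose (n1-1) : ℝ) * ∑ i, (a i)^2
        + (c2v n n1 : ℝ) * ((∑ i, a i)^2 - ∑ i, (a i)^2) := by
        rw [Finset.sum_add_distrib, ← Finset.mul_sum]
        congr 1
        have : ∀ i : Fin n, ∑ j ∈ univ.erase i, (c2v n n1 : ℝ) * (a i * a j)
            = (c2v n n1 : ℝ) * (a i * ((∑ j, a j) - a i)) := by
          intro i
          rw [← Finset.mul_sum, ← Finset.mul_sum, Finset.sum_erase_eq_sub (mem_univ i)]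
        rw [Finset.sum_congr rfl fun i _ => this i, ← Finset.mul_sum]
        congr 1
        simp only [mul_sub, Finset.sum_sub_distrib, ← Finset.sum_mul, sq]


lemma var_expand {n : ℕ} (hn : (n:ℝ) ≠ 0) (v : Fin n → ℝ) :
    ∑ i, (v i - fmean v) ^ 2 = ∑ i, (v i)^2 - (∑ i, v i)^2 / n := by
  have h : ∑ i, (v i - fmean v) ^ 2
      = ∑ i, ((v i)^2 - 2 * fmean v * v i + fmean v ^ 2) :=
    Finset.sum_congr rfl fun i _ => by ring
  rw [h, Finset.sum_add_distrib, Finset.sum_sub_distrib, ← Finset.mul_sum,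
    Finset.sum_const, card_univ, Fintype.card_fin, nsmul_eq_mul, fmean]
  field_simp
  ring

lemma fmean_sub {n : ℕ} (v w : Fin n → ℝ) :
    fmean (fun i => v i - w i) = fmean v - fmean w := by
  simp [fmean, Finset.sum_sub_distrib, mul_sub]

/-- Neyman's variance formula for the difference-in-means estimator
in a completely randomized experiment. -/
theorem diff_in_means_variance (n n1 : ℕ) (hn : 2 ≤ n) (h1 : 0 < n1) (h2 : n1 < n)
    (R1 R0 : Fin n → ℝ)
    (μ : ℝ)
    (hμ : μ = (∑ S ∈ (Finset.univ : Finset (Fin n)).powersetCard n1,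
        dimEst n1 R1 R0 S) / (n.choose n1 : ℝ)) :
    (∑ S ∈ (Finset.univ : Finset (Fin n)).powersetCard n1,
        (dimEst n1 R1 R0 S - μ) ^ 2) / (n.choose n1 : ℝ)
    = fvar R1 / (n1 : ℝ) + fvar R0 / ((n - n1 : ℕ) : ℝ)
      - fvar (fun i => R1 i - R0 i) / (n : ℝ) := by
  have hNpos : (0:ℝ) < (n:ℝ) := by exact_mod_cast (by omega : 0 < n)
  have hN : (n:ℝ) ≠ 0 := ne_of_gt hNpos
  have hN2 : (2:ℝ) ≤ (n:ℝ) := by exact_mod_cast hn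
  have hN1 : (n:ℝ) - 1 ≠ 0 := by linarith
  have hKpos : (0:ℝ) < (n1:ℝ) := by exact_mod_cast h1
  have hK : (n1:ℝ) ≠ 0 := ne_of_gt hKpos
  have hK0pos : (0:ℝ) < ((n - n1 : ℕ):ℝ) := by exact_mod_cast (by omega : 0 < n - n1)
  have hK0ne : ((n - n1 : ℕ):ℝ) ≠ 0 := ne_of_gt hK0pos
  have hK0eq : ((n - n1 : ℕ):ℝ) = (n:ℝ) - (n1:ℝ) := by
    push_cast [Nat.cast_sub h2.le]; ring
  have hCpos : (0:ℝ) < (n.choose n1 : ℝ) := by exact_mod_cast Nat.choose_pos h2.le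
  have hC : (n.choose n1 : ℝ) ≠ 0 := ne_of_gt hCpos
  -- the auxiliary variable
  set a : Fin n → ℝ := fun i => R1 i / (n1:ℝ) + R0 i / ((n - n1 : ℕ):ℝ) with ha
  set c : ℝ := (∑ i, R0 i) / ((n - n1 : ℕ):ℝ) with hc
  have hdim : ∀ S : Finset (Fin n), dimEst n1 R1 R0 S = (∑ i ∈ S, a i) - c := by
    intro S
    have hcompl : ∑ i ∈ Sᶜ, R0 i = (∑ i, R0 i) - ∑ i ∈ S, R0 i := by
      rw [eq_sub_iff_add_eq, add_comm]
      exact Finset.sum_add_sum_compl S R0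
    rw [dimEst, hcompl, hc, ha]
    rw [Finset.sum_add_distrib, ← Finset.sum_div, ← Finset.sum_div]
    field_simp
    ring
  have hcard : ((univ : Finset (Fin n)).powersetCard n1).card = n.choose n1 := by
    rw [card_powersetCard, card_univ, Fintype.card_fin]
  have hSig1 : ∑ S ∈ (univ : Finset (Fin n)).powersetCard n1, ∑ i ∈ S, a i
      = ((n-1).choose (n1-1) : ℝ) * ∑ i, a i := by
    obtain ⟨k, hk⟩ : ∃ k, n1 = k + 1 := ⟨n1 - 1, by omega⟩
    rw [hk]
    have := sum1 k a
    simpa using this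
  have hSig2 := sum2 n1 h1 a
  set A : ℝ := ∑ i, a i with hA
  set B : ℝ := ∑ i, (a i)^2 with hB
  set c1 : ℝ := ((n-1).choose (n1-1) : ℝ) with hc1'
  set c2 : ℝ := ((c2v n n1 : ℕ) : ℝ) with hc2'
  -- choose identities
  have e1 : (n:ℝ) * c1 = (n.choose n1 : ℝ) * (n1:ℝ) := by
    have h := Nat.add_one_mul_choose_eq (n-1) (n1-1)
    rw [Nat.sub_add_cancel (by omega : 1 ≤ n), Nat.sub_add_cancel (by omega : 1 ≤ n1)] at h
    rw [hc1']
    exact_mod_cast h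
  have e2 : c2 * ((n:ℝ) * ((n:ℝ)-1)) = (n.choose n1 : ℝ) * ((n1:ℝ) * ((n1:ℝ)-1)) := by
    rcases le_or_gt 2 n1 with h2' | h2'
    · have h' := Nat.add_one_mul_choose_eq (n-2) (n1-2)
      have hr1 : n - 2 + 1 = n - 1 := by omega
      have hr2 : n1 - 2 + 1 = n1 - 1 := by omega
      rw [hr1, hr2] at h'
      have h'' : ((n-1:ℕ):ℝ) * ((n-2).choose (n1-2) : ℝ)
          = ((n-1).choose (n1-1) : ℝ) * ((n1-1:ℕ):ℝ) := by exact_mod_cast h'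
      rw [Nat.cast_sub (by omega : 1 ≤ n), Nat.cast_sub (by omega : 1 ≤ n1)] at h''
      push_cast at h''
      have hcv : c2 = ((n-2).choose (n1-2) : ℝ) := by
        rw [hc2', c2v, if_pos h2']
      rw [hcv]
      rw [hc1'] at e1
      linear_combination (n:ℝ) * h'' + ((n1:ℝ) - 1) * e1
    · have hn1 : n1 = 1 := by omega
      have hcv : c2 = 0 := by rw [hc2', c2v, if_neg (by omega)]; simp
      rw [hcv, hn1]
      norm_num
  -- mean
  have hμ' : μ = c1 * A / (n.choose n1 : ℝ) - c := by
    rw [hμ, Finset.sum_congr rfl fun S _ => hdim S, Finset.sum_sub_distrib, hSig1,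
      Finset.sum_const, hcard, nsmul_eq_mul]
    rw [sub_div, mul_div_cancel_left₀ c hC]
  set ν : ℝ := c1 * A / (n.choose n1 : ℝ) with hν
  have hμν : μ + c = ν := by rw [hμ']; ring
  -- expand the sum of squares
  have hexp : ∑ S ∈ (univ : Finset (Fin n)).powersetCard n1, (dimEst n1 R1 R0 S - μ) ^ 2
      = (c1 * B + c2 * (A^2 - B)) - 2 * ν * (c1 * A) + (n.choose n1 : ℝ) * ν^2 := by
    have step : ∀ S ∈ (univ : Finset (Fin n)).powersetCard n1,
        (dimEst n1 R1 R0 S - μ) ^ 2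
          = (∑ i ∈ S, a i)^2 - 2 * ν * (∑ i ∈ S, a i) + ν^2 := by
      intro S _
      rw [hdim S, ← hμν]
      ring
    rw [Finset.sum_congr rfl step, Finset.sum_add_distrib, Finset.sum_sub_distrib,
      ← Finset.mul_sum, hSig1, Finset.sum_const, hcard, nsmul_eq_mul]
    rw [hSig2]
  -- middle form
  have hM : (∑ S ∈ (univ : Finset (Fin n)).powersetCard n1,
        (dimEst n1 R1 R0 S - μ) ^ 2) / (n.choose n1 : ℝ)
      = ((n1:ℝ) * ((n:ℝ) - (n1:ℝ)) / ((n:ℝ) * ((n:ℝ)-1))) * (B - A*A/(n:ℝ)) := by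
    rw [hexp, hν]
    have hc1eq : c1 = (n.choose n1 : ℝ) * (n1:ℝ) / (n:ℝ) := by
      rw [eq_div_iff hN]
      linarith [e1]
    have hc2eq : c2 = (n.choose n1 : ℝ) * ((n1:ℝ) * ((n1:ℝ)-1)) / ((n:ℝ) * ((n:ℝ)-1)) := by
      rw [eq_div_iff (mul_ne_zero hN hN1)]
      exact e2
    rw [hc1eq, hc2eq]
    field_simp
    ring
  rw [hM]
  -- now the RHS
  have hma : fmean a = fmean R1 / (n1:ℝ) + fmean R0 / ((n - n1 : ℕ):ℝ) := by
    rw [fmean, fmean, fmean, ha]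
    rw [Finset.sum_add_distrib, ← Finset.sum_div, ← Finset.sum_div]
    ring
  have hmd : fmean (fun i => R1 i - R0 i) = fmean R1 - fmean R0 := fmean_sub R1 R0
  have key : ∀ i : Fin n,
      ((n1:ℝ) * ((n:ℝ) - (n1:ℝ)) / ((n:ℝ) * ((n:ℝ)-1))) * (a i - fmean a)^2
        = (1/((n:ℝ)-1)) * (R1 i - fmean R1)^2 / (n1:ℝ)
          + (1/((n:ℝ)-1)) * (R0 i - fmean R0)^2 / ((n - n1 : ℕ):ℝ)
          - (1/((n:ℝ)-1)) * ((R1 i - R0 i) - (fmean R1 - fmean R0))^2 / (n:ℝ) := by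
    intro i
    have hai : a i = R1 i / (n1:ℝ) + R0 i / ((n - n1 : ℕ):ℝ) := rfl
    rw [hai, hma, hK0eq]
    have hNK : (n:ℝ) - (n1:ℝ) ≠ 0 := by rw [← hK0eq]; exact hK0ne
    field_simp
    ring
  calc ((n1:ℝ) * ((n:ℝ) - (n1:ℝ)) / ((n:ℝ) * ((n:ℝ)-1))) * (B - A*A/(n:ℝ))
      = ((n1:ℝ) * ((n:ℝ) - (n1:ℝ)) / ((n:ℝ) * ((n:ℝ)-1))) * ∑ i, (a i - fmean a)^2 := by
        rw [var_expand hN a, ← hA, ← hB]; ring_nf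
    _ = ∑ i, ((n1:ℝ) * ((n:ℝ) - (n1:ℝ)) / ((n:ℝ) * ((n:ℝ)-1))) * (a i - fmean a)^2 :=
        Finset.mul_sum _ _ _
    _ = ∑ i, ((1/((n:ℝ)-1)) * (R1 i - fmean R1)^2 / (n1:ℝ)
          + (1/((n:ℝ)-1)) * (R0 i - fmean R0)^2 / ((n - n1 : ℕ):ℝ)
          - (1/((n:ℝ)-1)) * ((R1 i - R0 i) - (fmean R1 - fmean R0))^2 / (n:ℝ)) :=
        Finset.sum_congr rfl fun i _ => key i
    _ = fvar R1 / (n1 : ℝ) + fvar R0 / ((n - n1 : ℕ) : ℝ)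
        - fvar (fun i => R1 i - R0 i) / (n : ℝ) := by
        rw [Finset.sum_sub_distrib, Finset.sum_add_distrib]
        rw [fvar, fvar, fvar, hmd]
        rw [Finset.mul_sum, Finset.mul_sum, Finset.mul_sum]
        rw [Finset.sum_div, Finset.sum_div, Finset.sum_div]
end

section
/- Let A_i(z), i = 1,…,n, be fixed reals and X_i ∈ ℝ^p fixed covariates with positive-definite finite-population covariance S²_X. Let δ(z) be the least-squares slope of A_i(z) on X_i and A_adj,i(z) = A_i(z) − (X_i − X̄)ᵀδ(z). Then for p_1 + p_0 = 1, p_1, p_0 > 0: [S²_{A_adj(1)}/p_1 + S²_{A_adj(0)}/p_0 − S²_{A_adj(1)−A_adj(0)}] − [S²_{A(1)}/p_1 + S²_{A(0)}/p_0 − S²_{A(1)−A(0)}] = −(1/(p_1 p_0))(p_0 δ(1) + p_1 δ(0))ᵀ S²_X (p_0 δ(1) + p_1 δ(0)) ≤ 0. -/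
open Finset

/-- Finite-population covariance. -/
noncomputable def fcov {n : ℕ} (v w : Fin n → ℝ) : ℝ :=
  (1 / ((n : ℝ) - 1)) * ∑ i, (v i - fmean v) * (w i - fmean w)

lemma sum_sq_decomp {n : ℕ} (r m : Fin n → ℝ) (h : ∑ i, r i * m i = 0) :
    ∑ i, (r i + m i) ^ 2 = ∑ i, r i ^ 2 + ∑ i, m i ^ 2 := by
  have e : ∀ i : Fin n, (r i + m i) ^ 2 = r i ^ 2 + 2 * (r i * m i) + m i ^ 2 := by
    intro i; ring
  simp_rw [e]
  rw [Finset.sum_add_distrib, Finset.sum_add_distrib, ← Finset.mul_sum, h]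
  ring

lemma sum_proj {n p : ℕ} (c : Fin n → Fin p → ℝ) (d : Fin p → ℝ) (r : Fin n → ℝ)
    (h : ∀ k, ∑ i, c i k * r i = 0) : ∑ i, (∑ k, c i k * d k) * r i = 0 := by
  have e : ∑ i, (∑ k, c i k * d k) * r i = ∑ k, d k * ∑ i, c i k * r i := by
    simp_rw [Finset.sum_mul, Finset.mul_sum]
    rw [Finset.sum_comm]
    refine Finset.sum_congr rfl fun i _ => Finset.sum_congr rfl fun k _ => by ring
  rw [e]
  simp [h]

lemma normal_eq {n p : ℕ} (c : Fin n → Fin p → ℝ) (a : Fin n → ℝ) (d : Fin p → ℝ)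
    (hd : ∀ b : Fin p → ℝ,
      ∑ i, (a i - ∑ k, c i k * d k) ^ 2 ≤ ∑ i, (a i - ∑ k, c i k * b k) ^ 2)
    (k : Fin p) : ∑ i, c i k * (a i - ∑ l, c i l * d l) = 0 := by
  set r : Fin n → ℝ := fun i => a i - ∑ l, c i l * d l with hr
  set B : ℝ := ∑ i, c i k * r i with hB
  set C : ℝ := ∑ i, (c i k) ^ 2 with hC
  have hCpos : (0:ℝ) ≤ C := Finset.sum_nonneg fun i _ => sq_nonneg _
  set t : ℝ := B / (C + 1) with ht
  have key := hd (fun l => d l + if l = k then t else 0)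
  have hb : ∀ i, ∑ l, c i l * (d l + if l = k then t else 0)
      = (∑ l, c i l * d l) + c i k * t := by
    intro i
    simp [mul_add, Finset.sum_add_distrib, mul_ite, Finset.sum_ite_eq']
  have expand : ∑ i, (a i - ∑ l, c i l * (d l + if l = k then t else 0)) ^ 2
      = ∑ i, r i ^ 2 - 2 * t * B + t ^ 2 * C := by
    have e : ∀ i : Fin n, (a i - ∑ l, c i l * (d l + if l = k then t else 0)) ^ 2
        = r i ^ 2 - 2 * t * (c i k * r i) + t ^ 2 * (c i k) ^ 2 := by
      intro i; rw [hb i]; simp only [hr]; ring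
    simp_rw [e]
    rw [Finset.sum_add_distrib, Finset.sum_sub_distrib, ← Finset.mul_sum, ← Finset.mul_sum]
  rw [expand] at key
  have h2 : 0 ≤ -2 * t * B + t ^ 2 * C := by linarith
  have hC1 : (0:ℝ) < C + 1 := by linarith
  have hB0 : B = 0 := by
    rw [ht] at h2
    have h4 : 0 ≤ (-2 * (B / (C + 1)) * B + (B / (C + 1)) ^ 2 * C) * (C + 1) ^ 2 :=
      mul_nonneg h2 (sq_nonneg _)
    have h5 : (-2 * (B / (C + 1)) * B + (B / (C + 1)) ^ 2 * C) * (C + 1) ^ 2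
        = -B ^ 2 * (C + 2) := by
      field_simp
      ring
    rw [h5] at h4
    nlinarith [sq_nonneg B]
  exact hB0

lemma triple_swap {n p : ℕ} (c : Fin n → Fin p → ℝ) (v : Fin p → ℝ) (N : ℝ) :
    ∑ k, ∑ l, v k * (N * ∑ i, c i k * c i l) * v l
      = N * ∑ i, (∑ k, c i k * v k) ^ 2 := by
  have eL : ∀ k l : Fin p, v k * (N * ∑ i, c i k * c i l) * v l
      = ∑ i, N * ((c i k * v k) * (c i l * v l)) := by
    intro k l
    simp only [Finset.mul_sum, Finset.sum_mul]
    exact Finset.sum_congr rfl fun i _ => by ring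
  simp_rw [eL]
  have e : ∀ i : Fin n, (∑ k, c i k * v k) ^ 2
      = ∑ k, ∑ l, (c i k * v k) * (c i l * v l) := by
    intro i; rw [sq, Finset.sum_mul_sum]
  simp_rw [e, Finset.mul_sum]
  rw [show (∑ k, ∑ l, ∑ i, N * ((c i k * v k) * (c i l * v l)))
      = ∑ k, ∑ i, ∑ l, N * ((c i k * v k) * (c i l * v l)) from
    Finset.sum_congr rfl fun k _ => Finset.sum_comm]
  rw [Finset.sum_comm]

/-- Difference of the (normalized) asymptotic variance expressions for the
regression-adjusted and unadjusted estimators. -/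
theorem adjusted_vs_unadjusted_variance (n p : ℕ) (hn : 2 ≤ n)
    (A1 A0 : Fin n → ℝ) (X : Fin n → Fin p → ℝ)
    (hX : (Matrix.of fun k l : Fin p =>
        fcov (fun i => X i k) (fun i => X i l)).PosDef)
    (d1 d0 : Fin p → ℝ)
    (hd1 : ∀ b : Fin p → ℝ,
      ∑ i, (A1 i - fmean A1 - ∑ k, (X i k - fmean (fun j => X j k)) * d1 k) ^ 2
        ≤ ∑ i, (A1 i - fmean A1 - ∑ k, (X i k - fmean (fun j => X j k)) * b k) ^ 2)
    (hd0 : ∀ b : Fin p → ℝ,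
      ∑ i, (A0 i - fmean A0 - ∑ k, (X i k - fmean (fun j => X j k)) * d0 k) ^ 2
        ≤ ∑ i, (A0 i - fmean A0 - ∑ k, (X i k - fmean (fun j => X j k)) * b k) ^ 2)
    (p1 p0 : ℝ) (hp1 : 0 < p1) (hp0 : 0 < p0) (hsum : p1 + p0 = 1)
    (Aadj1 Aadj0 : Fin n → ℝ)
    (hAadj1 : Aadj1 = fun i => A1 i - ∑ k, (X i k - fmean (fun j => X j k)) * d1 k)
    (hAadj0 : Aadj0 = fun i => A0 i - ∑ k, (X i k - fmean (fun j => X j k)) * d0 k) :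
    (fvar Aadj1 / p1 + fvar Aadj0 / p0 - fvar (fun i => Aadj1 i - Aadj0 i))
      - (fvar A1 / p1 + fvar A0 / p0 - fvar (fun i => A1 i - A0 i))
      = -(1 / (p1 * p0)) *
          ∑ k, ∑ l, (p0 * d1 k + p1 * d0 k) *
            fcov (fun i => X i k) (fun i => X i l) * (p0 * d1 l + p1 * d0 l) ∧
    (fvar Aadj1 / p1 + fvar Aadj0 / p0 - fvar (fun i => Aadj1 i - Aadj0 i))
      - (fvar A1 / p1 + fvar A0 / p0 - fvar (fun i => A1 i - A0 i)) ≤ 0 := by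
  have hn2 : (2:ℝ) ≤ (n:ℝ) := by exact_mod_cast hn
  have hnne : (n:ℝ) ≠ 0 := by linarith
  have hn1pos : (0:ℝ) < (n:ℝ) - 1 := by linarith
  set N : ℝ := 1 / ((n:ℝ) - 1) with hN
  have hNpos : 0 < N := by rw [hN]; positivity
  set c : Fin n → Fin p → ℝ := fun i k => X i k - fmean (fun j => X j k) with hc
  set m1 : Fin n → ℝ := fun i => ∑ k, c i k * d1 k with hm1def
  set m0 : Fin n → ℝ := fun i => ∑ k, c i k * d0 k with hm0def
  set r1 : Fin n → ℝ := fun i => A1 i - fmean A1 - m1 i with hr1def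
  set r0 : Fin n → ℝ := fun i => A0 i - fmean A0 - m0 i with hr0def
  set a1 : Fin n → ℝ := fun i => A1 i - fmean A1 with ha1def
  set a0 : Fin n → ℝ := fun i => A0 i - fmean A0 with ha0def
  -- centered covariates sum to zero
  have hcsum : ∀ k, ∑ i, c i k = 0 := by
    intro k
    have e : ∑ i, c i k = ∑ i, X i k - (n:ℝ) * fmean (fun j => X j k) := by
      rw [hc]
      rw [Finset.sum_sub_distrib, Finset.sum_const, card_univ, Fintype.card_fin, nsmul_eq_mul]
    rw [e, fmean]
    field_simp
    ring
  have hm1sum : ∑ i, m1 i = 0 := by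
    simp only [hm1def]
    rw [Finset.sum_comm]
    simp only [← Finset.sum_mul]
    simp [hcsum]
  have hm0sum : ∑ i, m0 i = 0 := by
    simp only [hm0def]
    rw [Finset.sum_comm]
    simp only [← Finset.sum_mul]
    simp [hcsum]
  -- normal equations
  have hNE1 : ∀ k, ∑ i, c i k * r1 i = 0 := by
    intro k
    have h := normal_eq c (fun i => A1 i - fmean A1) d1 (fun b => hd1 b) k
    simpa [hr1def, hm1def] using h
  have hNE0 : ∀ k, ∑ i, c i k * r0 i = 0 := by
    intro k
    have h := normal_eq c (fun i => A0 i - fmean A0) d0 (fun b => hd0 b) k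
    simpa [hr0def, hm0def] using h
  -- orthogonality of fitted values and residuals
  have hP11 : ∑ i, m1 i * r1 i = 0 := by
    have h := sum_proj c d1 r1 hNE1
    simpa [hm1def] using h
  have hP01 : ∑ i, m0 i * r1 i = 0 := by
    have h := sum_proj c d0 r1 hNE1
    simpa [hm0def] using h
  have hP10 : ∑ i, m1 i * r0 i = 0 := by
    have h := sum_proj c d1 r0 hNE0
    simpa [hm1def] using h
  have hP00 : ∑ i, m0 i * r0 i = 0 := by
    have h := sum_proj c d0 r0 hNE0
    simpa [hm0def] using h
  -- Pythagorean decompositions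
  have hd1sq : ∑ i, a1 i ^ 2 = ∑ i, r1 i ^ 2 + ∑ i, m1 i ^ 2 := by
    have h := sum_sq_decomp r1 m1 (by
      simpa [mul_comm] using hP11)
    rw [← h]
    refine Finset.sum_congr rfl fun i _ => ?_
    simp only [ha1def, hr1def]
    ring
  have hd0sq : ∑ i, a0 i ^ 2 = ∑ i, r0 i ^ 2 + ∑ i, m0 i ^ 2 := by
    have h := sum_sq_decomp r0 m0 (by
      simpa [mul_comm] using hP00)
    rw [← h]
    refine Finset.sum_congr rfl fun i _ => ?_
    simp only [ha0def, hr0def]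
    ring
  have hddsq : ∑ i, (a1 i - a0 i) ^ 2
      = ∑ i, (r1 i - r0 i) ^ 2 + ∑ i, (m1 i - m0 i) ^ 2 := by
    have horth : ∑ i, (r1 i - r0 i) * (m1 i - m0 i) = 0 := by
      have e : ∀ i : Fin n, (r1 i - r0 i) * (m1 i - m0 i)
          = m1 i * r1 i - m0 i * r1 i - m1 i * r0 i + m0 i * r0 i := fun i => by ring
      simp_rw [e]
      rw [Finset.sum_add_distrib, Finset.sum_sub_distrib, Finset.sum_sub_distrib,
        hP11, hP01, hP10, hP00]
      ring
    have h := sum_sq_decomp (fun i => r1 i - r0 i) (fun i => m1 i - m0 i) horth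
    rw [← h]
    refine Finset.sum_congr rfl fun i _ => ?_
    simp only [ha1def, ha0def, hr1def, hr0def]
    ring
  -- mean linearity
  have hfmean_sub : ∀ u v : Fin n → ℝ, fmean (fun i => u i - v i) = fmean u - fmean v := by
    intro u v
    unfold fmean
    rw [Finset.sum_sub_distrib]
    ring
  -- means of adjusted outcomes
  have hsum_m1 : ∑ i, ∑ k, (X i k - fmean (fun j => X j k)) * d1 k = 0 := by
    have h := hm1sum
    simp only [hm1def, hc] at h
    exact h
  have hsum_m0 : ∑ i, ∑ k, (X i k - fmean (fun j => X j k)) * d0 k = 0 := by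
    have h := hm0sum
    simp only [hm0def, hc] at h
    exact h
  have hz1 : fmean (fun i => ∑ k, (X i k - fmean (fun j => X j k)) * d1 k) = 0 := by
    show (1 / (n:ℝ)) * ∑ i, ∑ k, (X i k - fmean (fun j => X j k)) * d1 k = 0
    rw [hsum_m1]; ring
  have hz0 : fmean (fun i => ∑ k, (X i k - fmean (fun j => X j k)) * d0 k) = 0 := by
    show (1 / (n:ℝ)) * ∑ i, ∑ k, (X i k - fmean (fun j => X j k)) * d0 k = 0
    rw [hsum_m0]; ring
  have hmeanAadj1 : fmean Aadj1 = fmean A1 := by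
    rw [hAadj1, hfmean_sub A1 (fun i => ∑ k, (X i k - fmean (fun j => X j k)) * d1 k), hz1]
    ring
  have hmeanAadj0 : fmean Aadj0 = fmean A0 := by
    rw [hAadj0, hfmean_sub A0 (fun i => ∑ k, (X i k - fmean (fun j => X j k)) * d0 k), hz0]
    ring
  -- variance conversions
  have hvAadj1 : fvar Aadj1 = N * ∑ i, r1 i ^ 2 := by
    unfold fvar
    rw [hmeanAadj1, ← hN]
    congr 1
    refine Finset.sum_congr rfl fun i _ => ?_
    rw [hAadj1]
    simp only [hr1def, hm1def, hc]
    ring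
  have hvAadj0 : fvar Aadj0 = N * ∑ i, r0 i ^ 2 := by
    unfold fvar
    rw [hmeanAadj0, ← hN]
    congr 1
    refine Finset.sum_congr rfl fun i _ => ?_
    rw [hAadj0]
    simp only [hr0def, hm0def, hc]
    ring
  have hvAadjD : fvar (fun i => Aadj1 i - Aadj0 i) = N * ∑ i, (r1 i - r0 i) ^ 2 := by
    unfold fvar
    rw [hfmean_sub, hmeanAadj1, hmeanAadj0, ← hN]
    congr 1
    refine Finset.sum_congr rfl fun i _ => ?_
    rw [hAadj1, hAadj0]
    simp only [hr1def, hr0def, hm1def, hm0def, hc]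
    ring
  have hvA1 : fvar A1 = N * ∑ i, a1 i ^ 2 := by
    unfold fvar
    rw [← hN]
  have hvA0 : fvar A0 = N * ∑ i, a0 i ^ 2 := by
    unfold fvar
    rw [← hN]
  have hvAD : fvar (fun i => A1 i - A0 i) = N * ∑ i, (a1 i - a0 i) ^ 2 := by
    unfold fvar
    rw [hfmean_sub, ← hN]
    congr 1
    refine Finset.sum_congr rfl fun i _ => ?_
    simp only [ha1def, ha0def]
    ring
  -- covariance conversion
  have hcov : ∀ k l, fcov (fun i => X i k) (fun i => X i l) = N * ∑ i, c i k * c i l := by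
    intro k l
    unfold fcov
    rw [← hN]
  -- the quadratic form on the right-hand side
  have hRHS : ∑ k, ∑ l, (p0 * d1 k + p1 * d0 k) *
        fcov (fun i => X i k) (fun i => X i l) * (p0 * d1 l + p1 * d0 l)
      = N * ∑ i, (p0 * m1 i + p1 * m0 i) ^ 2 := by
    simp_rw [hcov]
    rw [triple_swap c (fun k => p0 * d1 k + p1 * d0 k) N]
    congr 1
    refine Finset.sum_congr rfl fun i _ => ?_
    congr 1
    simp only [hm1def, hm0def, Finset.mul_sum]
    rw [← Finset.sum_add_distrib]
    refine Finset.sum_congr rfl fun k _ => by ring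
  have hQ : ∑ i, (p0 * m1 i + p1 * m0 i) ^ 2
      = p0 ^ 2 * ∑ i, m1 i ^ 2 + 2 * p0 * p1 * ∑ i, m1 i * m0 i + p1 ^ 2 * ∑ i, m0 i ^ 2 := by
    simp_rw [show ∀ i : Fin n, (p0 * m1 i + p1 * m0 i) ^ 2
        = p0 ^ 2 * m1 i ^ 2 + 2 * p0 * p1 * (m1 i * m0 i) + p1 ^ 2 * m0 i ^ 2
      from fun i => by ring]
    rw [Finset.sum_add_distrib, Finset.sum_add_distrib, ← Finset.mul_sum, ← Finset.mul_sum,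
      ← Finset.mul_sum]
  have hMd : ∑ i, (m1 i - m0 i) ^ 2
      = ∑ i, m1 i ^ 2 - 2 * ∑ i, m1 i * m0 i + ∑ i, m0 i ^ 2 := by
    simp_rw [show ∀ i : Fin n, (m1 i - m0 i) ^ 2
        = m1 i ^ 2 - 2 * (m1 i * m0 i) + m0 i ^ 2 from fun i => by ring]
    rw [Finset.sum_add_distrib, Finset.sum_sub_distrib, ← Finset.mul_sum]
  -- residual sums of squares
  have hr1sq : ∑ i, r1 i ^ 2 = ∑ i, a1 i ^ 2 - ∑ i, m1 i ^ 2 := by linarith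
  have hr0sq : ∑ i, r0 i ^ 2 = ∑ i, a0 i ^ 2 - ∑ i, m0 i ^ 2 := by linarith
  have hrdsq : ∑ i, (r1 i - r0 i) ^ 2
      = ∑ i, (a1 i - a0 i) ^ 2 - ∑ i, (m1 i - m0 i) ^ 2 := by linarith
  have hp1ne : p1 ≠ 0 := ne_of_gt hp1
  have hp0ne : p0 ≠ 0 := ne_of_gt hp0
  have main : (fvar Aadj1 / p1 + fvar Aadj0 / p0 - fvar (fun i => Aadj1 i - Aadj0 i))
      - (fvar A1 / p1 + fvar A0 / p0 - fvar (fun i => A1 i - A0 i))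
      = -(1 / (p1 * p0)) * (N * ∑ i, (p0 * m1 i + p1 * m0 i) ^ 2) := by
    rw [hvAadj1, hvAadj0, hvAadjD, hvA1, hvA0, hvAD, hr1sq, hr0sq, hrdsq, hQ, hMd]
    set M1 : ℝ := ∑ i, m1 i ^ 2
    set M0 : ℝ := ∑ i, m0 i ^ 2
    set M10 : ℝ := ∑ i, m1 i * m0 i
    set A1s : ℝ := ∑ i, a1 i ^ 2
    set A0s : ℝ := ∑ i, a0 i ^ 2
    set Ads : ℝ := ∑ i, (a1 i - a0 i) ^ 2
    have hp0e : p0 = 1 - p1 := by linarith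
    rw [hp0e]
    have h1p1 : (1:ℝ) - p1 ≠ 0 := by rw [← hp0e]; exact hp0ne
    field_simp
    ring
  refine ⟨?_, ?_⟩
  · rw [hRHS]
    exact main
  · rw [main]
    have hQpos : 0 ≤ ∑ i, (p0 * m1 i + p1 * m0 i) ^ 2 :=
      Finset.sum_nonneg fun i _ => sq_nonneg _
    have h1 : (0:ℝ) < 1 / (p1 * p0) := by positivity
    have h2 : 0 ≤ 1 / (p1 * p0) * (N * ∑ i, (p0 * m1 i + p1 * m0 i) ^ 2) :=
      mul_nonneg h1.le (mul_nonneg hNpos.le hQpos)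
    have h3 : -(1 / (p1 * p0)) * (N * ∑ i, (p0 * m1 i + p1 * m0 i) ^ 2)
        = -(1 / (p1 * p0) * (N * ∑ i, (p0 * m1 i + p1 * m0 i) ^ 2)) := by ring
    rw [h3]
    exact neg_nonpos.mpr h2
end

section
/- In a completely randomized experiment, the sampling covariance between the two difference-in-means estimators is Cov(τ̂_Y, τ̂_D) = S_{Y(1)D(1)}/n_1 + S_{Y(0)D(0)}/n_0 − S_{(Y(1)−Y(0))(D(1)−D(0))}/n, where S_{RQ} denotes the finite-population covariance (1/(n−1))∑_i (R_i − R̄)(Q_i − Q̄). -/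
open Finset

variable {α : Type*} [DecidableEq α]

lemma card_image_insert (i : α) (B : Finset (Finset α)) (hB : ∀ T ∈ B, i ∉ T) :
    (B.image (insert i)).card = B.card := by
  apply Finset.card_image_of_injOn
  intro T1 h1 T2 h2 h
  rw [← Finset.erase_insert (hB T1 h1), h, Finset.erase_insert (hB T2 h2)]

lemma filter_mem_powersetCard (s : Finset α) (i : α) (hi : i ∈ s) (k : ℕ) :
    (s.powersetCard (k+1)).filter (fun S => i ∈ S)
      = ((s.erase i).powersetCard k).image (insert i) := by
  ext S
  simp only [mem_filter, mem_powersetCard, mem_image]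
  constructor
  · rintro ⟨⟨hSs, hSc⟩, hiS⟩
    refine ⟨S.erase i, ⟨?_, ?_⟩, ?_⟩
    · intro x hx
      rw [mem_erase] at hx ⊢
      exact ⟨hx.1, hSs hx.2⟩
    · rw [Finset.card_erase_of_mem hiS, hSc]; omega
    · exact Finset.insert_erase hiS
  · rintro ⟨T, ⟨hTs, hTc⟩, rfl⟩
    have hiT : i ∉ T := fun h => (mem_erase.mp (hTs h)).1 rfl
    refine ⟨⟨?_, ?_⟩, mem_insert_self i T⟩
    · intro x hx
      rcases mem_insert.mp hx with rfl | hx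
      · exact hi
      · exact (mem_erase.mp (hTs hx)).2
    · rw [Finset.card_insert_of_notMem hiT, hTc]

lemma filter_not_mem_powersetCard (s : Finset α) (i : α) (k : ℕ) :
    (s.powersetCard k).filter (fun S => i ∉ S) = (s.erase i).powersetCard k := by
  ext S
  simp only [mem_filter, mem_powersetCard, Finset.subset_erase]
  tauto

lemma card_filter_mem (s : Finset α) (i : α) (hi : i ∈ s) (k : ℕ) :
    ((s.powersetCard (k+1)).filter (fun S => i ∈ S)).card = (s.card - 1).choose k := by
  rw [filter_mem_powersetCard s i hi k, card_image_insert, Finset.card_powersetCard,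
    Finset.card_erase_of_mem hi]
  intro T hT
  rw [mem_powersetCard] at hT
  exact fun h => (mem_erase.mp (hT.1 h)).1 rfl

lemma card_filter_not_mem (s : Finset α) (i : α) (hi : i ∈ s) (k : ℕ) :
    ((s.powersetCard k).filter (fun S => i ∉ S)).card = (s.card - 1).choose k := by
  rw [filter_not_mem_powersetCard, Finset.card_powersetCard, Finset.card_erase_of_mem hi]

lemma card_filter_mem_mem (s : Finset α) (i j : α) (hi : i ∈ s) (hj : j ∈ s) (hij : i ≠ j)
    (k : ℕ) :
    ((s.powersetCard (k+2)).filter (fun S => i ∈ S ∧ j ∈ S)).card = (s.card - 2).choose k := by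
  have h1 : (s.powersetCard (k+2)).filter (fun S => i ∈ S ∧ j ∈ S)
      = ((s.powersetCard (k+2)).filter (fun S => i ∈ S)).filter (fun S => j ∈ S) := by
    rw [Finset.filter_filter]
  rw [h1, filter_mem_powersetCard s i hi (k+1), Finset.filter_image]
  have h2 : (((s.erase i).powersetCard (k+1)).filter fun T => j ∈ insert i T)
      = ((s.erase i).powersetCard (k+1)).filter (fun T => j ∈ T) := by
    apply Finset.filter_congr; intro T _
    simp [Finset.mem_insert, hij.symm]
  rw [h2]
  have hj' : j ∈ s.erase i := Finset.mem_erase.mpr ⟨hij.symm, hj⟩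
  have hB : ∀ T ∈ ((s.erase i).powersetCard (k+1)).filter (fun T => j ∈ T), i ∉ T := by
    intro T hT
    rw [Finset.mem_filter, mem_powersetCard] at hT
    exact fun h => (mem_erase.mp (hT.1.1 h)).1 rfl
  rw [card_image_insert _ _ hB, card_filter_mem _ j hj' k, Finset.card_erase_of_mem hi,
    Nat.sub_sub]

lemma card_filter_mem_not_mem (s : Finset α) (i j : α) (hi : i ∈ s) (hj : j ∈ s) (hij : i ≠ j)
    (k : ℕ) :
    ((s.powersetCard (k+1)).filter (fun S => i ∈ S ∧ j ∉ S)).card = (s.card - 2).choose k := by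
  have h1 : (s.powersetCard (k+1)).filter (fun S => i ∈ S ∧ j ∉ S)
      = ((s.powersetCard (k+1)).filter (fun S => i ∈ S)).filter (fun S => j ∉ S) := by
    rw [Finset.filter_filter]
  rw [h1, filter_mem_powersetCard s i hi k, Finset.filter_image]
  have h2 : (((s.erase i).powersetCard k).filter fun T => j ∉ insert i T)
      = ((s.erase i).powersetCard k).filter (fun T => j ∉ T) := by
    apply Finset.filter_congr; intro T _
    simp [Finset.mem_insert, hij.symm]
  rw [h2]
  have hj' : j ∈ s.erase i := Finset.mem_erase.mpr ⟨hij.symm, hj⟩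
  have hB : ∀ T ∈ ((s.erase i).powersetCard k).filter (fun T => j ∉ T), i ∉ T := by
    intro T hT
    rw [Finset.mem_filter, mem_powersetCard] at hT
    exact fun h => (mem_erase.mp (hT.1.1 h)).1 rfl
  rw [card_image_insert _ _ hB, card_filter_not_mem _ j hj' k, Finset.card_erase_of_mem hi,
    Nat.sub_sub]

lemma card_filter_not_mem_not_mem (s : Finset α) (i j : α) (hi : i ∈ s) (hj : j ∈ s)
    (hij : i ≠ j) (k : ℕ) :
    ((s.powersetCard k).filter (fun S => i ∉ S ∧ j ∉ S)).card = (s.card - 2).choose k := by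
  have h1 : (s.powersetCard k).filter (fun S => i ∉ S ∧ j ∉ S)
      = ((s.powersetCard k).filter (fun S => i ∉ S)).filter (fun S => j ∉ S) := by
    rw [Finset.filter_filter]
  have hj' : j ∈ s.erase i := Finset.mem_erase.mpr ⟨hij.symm, hj⟩
  rw [h1, filter_not_mem_powersetCard s i k, filter_not_mem_powersetCard _ j k,
    Finset.card_powersetCard, Finset.card_erase_of_mem hj', Finset.card_erase_of_mem hi,
    Nat.sub_sub]
open Finset

lemma relA (N k : ℕ) (h1 : 1 ≤ k) (h2 : k ≤ N) :
    (N : ℝ) * ((N-1).choose (k-1)) = k * N.choose k := by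
  obtain ⟨N', rfl⟩ := Nat.exists_eq_add_of_le (Nat.le_trans h1 h2)
  obtain ⟨k', rfl⟩ := Nat.exists_eq_add_of_le h1
  simp only [Nat.add_sub_cancel_left]
  have h := Nat.add_one_mul_choose_eq N' k'
  have h' : (1 + N') * N'.choose k' = (1 + k') * ((1 + N').choose (1 + k')) := by
    rw [Nat.add_comm 1 N', Nat.add_comm 1 k']
    simpa [Nat.succ_eq_add_one, mul_comm] using h
  exact_mod_cast h'

lemma relB (N k : ℕ) (h2 : k ≤ N) :
    (N : ℝ) * ((N-1).choose k) = ((N : ℝ) - k) * N.choose k := by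
  rcases Nat.eq_zero_or_pos k with rfl | h1
  · simp
  obtain ⟨N', rfl⟩ := Nat.exists_eq_add_of_le (Nat.le_trans h1 h2)
  obtain ⟨k', rfl⟩ := Nat.exists_eq_add_of_le h1
  have hA := relA (1+N') (1+k') (by omega) (by omega)
  simp only [Nat.add_sub_cancel_left] at hA ⊢
  have hp : (1+N').choose (1+k') = N'.choose k' + N'.choose (1+k') := by
    rw [Nat.add_comm 1 N', Nat.add_comm 1 k', Nat.choose_succ_succ]
  have hp' : (N'.choose (1+k') : ℝ) = (1+N').choose (1+k') - N'.choose k' := by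
    rw [hp]; push_cast; ring
  push_cast at hA ⊢
  rw [hp']
  linear_combination -hA

variable {α : Type*} [Fintype α] [DecidableEq α]

lemma expand1 (F : Finset (Finset α)) (g : Finset α → Finset α) (a : α → ℝ) :
    ∑ S ∈ F, ∑ i ∈ g S, a i
      = ∑ i, ((F.filter (fun S => i ∈ g S)).card : ℝ) * a i := by
  have h1 : ∀ S ∈ F, ∑ i ∈ g S, a i = ∑ i, if i ∈ g S then a i else 0 := by
    intro S _
    rw [Finset.sum_ite_mem, Finset.univ_inter]
  rw [Finset.sum_congr rfl h1, Finset.sum_comm]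
  apply Finset.sum_congr rfl
  intro i _
  rw [Finset.sum_ite, Finset.sum_const_zero, add_zero, Finset.sum_const, nsmul_eq_mul]

lemma expand2 (F : Finset (Finset α)) (g h : Finset α → Finset α) (a b : α → ℝ) :
    ∑ S ∈ F, (∑ i ∈ g S, a i) * (∑ j ∈ h S, b j)
      = ∑ i, ∑ j, ((F.filter (fun S => i ∈ g S ∧ j ∈ h S)).card : ℝ) * (a i * b j) := by
  have h1 : ∀ S ∈ F, (∑ i ∈ g S, a i) * (∑ j ∈ h S, b j)
      = ∑ i, ∑ j, (if i ∈ g S ∧ j ∈ h S then a i * b j else 0) := by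
    intro S _
    rw [Finset.sum_mul_sum]
    have h2 : ∀ i : α, (∑ j : α, if i ∈ g S ∧ j ∈ h S then a i * b j else 0)
        = if i ∈ g S then ∑ j ∈ h S, a i * b j else 0 := by
      intro i
      by_cases hig : i ∈ g S
      · simp only [hig, true_and, if_true]
        rw [Finset.sum_ite_mem, Finset.univ_inter]
      · simp [hig]
    rw [Finset.sum_congr rfl (fun i (_ : i ∈ Finset.univ) => h2 i),
      Finset.sum_ite_mem, Finset.univ_inter]
  rw [Finset.sum_congr rfl h1, Finset.sum_comm]
  apply Finset.sum_congr rfl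
  intro i _
  rw [Finset.sum_comm]
  apply Finset.sum_congr rfl
  intro j _
  rw [Finset.sum_ite, Finset.sum_const_zero, add_zero, Finset.sum_const, nsmul_eq_mul]

lemma diag_split (a b : α → ℝ) (cd co : ℝ) :
    ∑ i, ∑ j, (if i = j then cd else co) * (a i * b j)
      = co * ((∑ i, a i) * (∑ i, b i)) + (cd - co) * ∑ i, a i * b i := by
  have h1 : ∀ i : α, ∀ j : α, (if i = j then cd else co) * (a i * b j)
      = co * (a i * b j) + (if i = j then (cd - co) * (a i * b j) else 0) := by
    intro i j; by_cases h : i = j <;> simp [h] <;> ring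
  simp only [h1, Finset.sum_add_distrib]
  congr 1
  · simp only [← Finset.mul_sum, ← Finset.sum_mul]
  · simp only [Finset.sum_ite_eq, Finset.mem_univ, if_true]
    rw [← Finset.mul_sum]
open Finset

section fcovlemma

lemma fcov_aux {n : ℕ} (hn : (n:ℝ) ≠ 0) (v w : Fin n → ℝ) :
    (1 / ((n : ℝ) - 1)) * ∑ i, (v i - (1 / (n : ℝ)) * ∑ k, v k) * (w i - (1 / (n : ℝ)) * ∑ k, w k)
      = (1/((n:ℝ)-1)) * ((∑ i, v i * w i) - (∑ i, v i) * (∑ i, w i) / n) := by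
  have h1 : ∀ i ∈ (Finset.univ : Finset (Fin n)),
      (v i - (1 / (n : ℝ)) * ∑ k, v k) * (w i - (1 / (n : ℝ)) * ∑ k, w k)
        = v i * w i - ((1 / (n : ℝ)) * ∑ k, w k) * v i - ((1 / (n : ℝ)) * ∑ k, v k) * w i
          + ((1 / (n : ℝ)) * ∑ k, v k) * ((1 / (n : ℝ)) * ∑ k, w k) := by
    intro i _; ring
  rw [Finset.sum_congr rfl h1, Finset.sum_add_distrib, Finset.sum_sub_distrib,
    Finset.sum_sub_distrib, ← Finset.mul_sum, ← Finset.mul_sum, Finset.sum_const,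
    Finset.card_univ, Fintype.card_fin, nsmul_eq_mul]
  congr 1
  field_simp
  ring

end fcovlemma

open Finset

set_option maxHeartbeats 2000000 in
/-- Sampling covariance between the two difference-in-means estimators
in a completely randomized experiment. -/
theorem diff_in_means_covariance (n n1 : ℕ) (hn : 2 ≤ n) (h1 : 0 < n1) (h2 : n1 < n)
    (Y1 Y0 D1 D0 : Fin n → ℝ)
    (μY μD : ℝ)
    (hμY : μY = (∑ S ∈ (Finset.univ : Finset (Fin n)).powersetCard n1,
        dimEst n1 Y1 Y0 S) / (n.choose n1 : ℝ))
    (hμD : μD = (∑ S ∈ (Finset.univ : Finset (Fin n)).powersetCard n1,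
        dimEst n1 D1 D0 S) / (n.choose n1 : ℝ)) :
    (∑ S ∈ (Finset.univ : Finset (Fin n)).powersetCard n1,
        (dimEst n1 Y1 Y0 S - μY) * (dimEst n1 D1 D0 S - μD)) / (n.choose n1 : ℝ)
    = fcov Y1 D1 / (n1 : ℝ) + fcov Y0 D0 / ((n - n1 : ℕ) : ℝ)
      - fcov (fun i => Y1 i - Y0 i) (fun i => D1 i - D0 i) / (n : ℝ) := by
  subst hμY hμD
  -- notation
  set P : Finset (Finset (Fin n)) := (Finset.univ : Finset (Fin n)).powersetCard n1 with hP
  set N : ℝ := (n.choose n1 : ℝ) with hN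
  have hNn : (n : ℝ) ≠ 0 := by positivity
  have hn1R : (n : ℝ) - 1 ≠ 0 := by
    have : (2:ℝ) ≤ (n:ℝ) := by exact_mod_cast hn
    linarith
  have hkR : (n1 : ℝ) ≠ 0 := by
    have : (1:ℝ) ≤ (n1:ℝ) := by exact_mod_cast h1
    linarith
  have hmR : (n : ℝ) - (n1:ℝ) ≠ 0 := by
    have : (n1:ℝ) < (n:ℝ) := by exact_mod_cast h2
    linarith
  have hN0 : N ≠ 0 := by
    rw [hN]
    exact_mod_cast (Nat.choose_pos h2.le).ne'
  have hm' : ((n - n1 : ℕ) : ℝ) = (n:ℝ) - (n1:ℝ) := by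
    rw [Nat.cast_sub h2.le]
  have hcardP : ((P.card : ℕ) : ℝ) = N := by
    rw [hP, Finset.card_powersetCard, Finset.card_univ, Fintype.card_fin, hN]
  -- count values
  have f1 : ∀ i : Fin n, ((P.filter (fun S => i ∈ S)).card : ℝ) = ↑n1 * N / ↑n := by
    intro i
    obtain ⟨k1, hk1⟩ : ∃ k1, n1 = k1 + 1 := ⟨n1 - 1, by omega⟩
    have h := relA n n1 (by omega) (by omega)
    rw [hk1] at h
    simp only [Nat.add_sub_cancel] at h
    rw [hP, hk1, card_filter_mem Finset.univ i (Finset.mem_univ i) k1, Finset.card_univ,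
      Fintype.card_fin, hN, hk1, eq_div_iff hNn]
    linear_combination h
  have f0 : ∀ i : Fin n, ((P.filter (fun S => i ∈ Sᶜ)).card : ℝ) = (↑n - ↑n1) * N / ↑n := by
    intro i
    have hfc : P.filter (fun S => i ∈ Sᶜ) = P.filter (fun S => i ∉ S) :=
      Finset.filter_congr (fun S _ => by simp)
    have h := relB n n1 (by omega)
    rw [hfc, hP, card_filter_not_mem Finset.univ i (Finset.mem_univ i) n1, Finset.card_univ,
      Fintype.card_fin, hN, eq_div_iff hNn]
    linear_combination h
  have f11 : ∀ i j : Fin n, ((P.filter (fun S => i ∈ S ∧ j ∈ S)).card : ℝ)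
      = if i = j then ↑n1 * N / ↑n else ↑n1 * (↑n1 - 1) * N / (↑n * (↑n - 1)) := by
    intro i j
    by_cases hij : i = j
    · subst hij
      rw [if_pos rfl]
      have hfc : P.filter (fun S => i ∈ S ∧ i ∈ S) = P.filter (fun S => i ∈ S) :=
        Finset.filter_congr (fun S _ => by simp)
      rw [hfc]
      exact f1 i
    · rw [if_neg hij]
      rcases Nat.lt_or_ge n1 2 with hl | hg
      · have hn1 : n1 = 1 := by omega
        have hemp : P.filter (fun S => i ∈ S ∧ j ∈ S) = ∅ := by
          rw [Finset.filter_eq_empty_iff]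
          intro S hS
          rw [hP, Finset.mem_powersetCard] at hS
          rintro ⟨hiS, hjS⟩
          refine hij (Finset.card_le_one.mp ?_ i hiS j hjS)
          rw [hS.2, hn1]
        rw [hemp]
        simp only [Finset.card_empty, Nat.cast_zero, hn1]
        push_cast
        ring
      · obtain ⟨k2, hk2⟩ : ∃ k2, n1 = k2 + 2 := ⟨n1 - 2, by omega⟩
        have hA1 := relA (n-1) (k2+1) (by omega) (by omega)
        have hA2 := relA n (k2+2) (by omega) (by omega)
        simp only [Nat.add_sub_cancel] at hA1 hA2
        rw [show n-1-1 = n-2 from by omega] at hA1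
        rw [Nat.cast_sub (show 1 ≤ n by omega)] at hA1
        rw [hP, hk2, card_filter_mem_mem Finset.univ i j (Finset.mem_univ i) (Finset.mem_univ j)
          hij k2, Finset.card_univ, Fintype.card_fin, hN, hk2,
          eq_div_iff (mul_ne_zero hNn hn1R)]
        push_cast at hA1 hA2 ⊢
        linear_combination (n:ℝ) * hA1 + ((k2:ℝ)+1) * hA2
  have f10 : ∀ i j : Fin n, ((P.filter (fun S => i ∈ S ∧ j ∈ Sᶜ)).card : ℝ)
      = if i = j then 0 else ↑n1 * (↑n - ↑n1) * N / (↑n * (↑n - 1)) := by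
    intro i j
    by_cases hij : i = j
    · subst hij
      rw [if_pos rfl]
      have hemp : P.filter (fun S => i ∈ S ∧ i ∈ Sᶜ) = ∅ := by
        rw [Finset.filter_eq_empty_iff]
        intro S _
        rintro ⟨hiS, hiSc⟩
        exact (Finset.mem_compl.mp hiSc) hiS
      rw [hemp]
      simp
    · rw [if_neg hij]
      obtain ⟨k1, hk1⟩ : ∃ k1, n1 = k1 + 1 := ⟨n1 - 1, by omega⟩
      have hfc : P.filter (fun S => i ∈ S ∧ j ∈ Sᶜ) = P.filter (fun S => i ∈ S ∧ j ∉ S) :=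
        Finset.filter_congr (fun S _ => by simp)
      have hB1 := relB (n-1) k1 (by omega)
      have hA2 := relA n n1 (by omega) (by omega)
      rw [hk1] at hA2
      simp only [Nat.add_sub_cancel] at hA2
      rw [show n-1-1 = n-2 from by omega] at hB1
      rw [Nat.cast_sub (show 1 ≤ n by omega)] at hB1
      rw [hfc, hP, hk1, card_filter_mem_not_mem Finset.univ i j (Finset.mem_univ i)
        (Finset.mem_univ j) hij k1, Finset.card_univ, Fintype.card_fin, hN, hk1,
        eq_div_iff (mul_ne_zero hNn hn1R)]
      push_cast at hB1 hA2 ⊢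
      linear_combination (n:ℝ) * hB1 + ((n:ℝ) - 1 - (k1:ℝ)) * hA2
  have f01 : ∀ i j : Fin n, ((P.filter (fun S => i ∈ Sᶜ ∧ j ∈ S)).card : ℝ)
      = if i = j then 0 else ↑n1 * (↑n - ↑n1) * N / (↑n * (↑n - 1)) := by
    intro i j
    by_cases hij : i = j
    · subst hij
      rw [if_pos rfl]
      have hemp : P.filter (fun S => i ∈ Sᶜ ∧ i ∈ S) = ∅ := by
        rw [Finset.filter_eq_empty_iff]
        intro S _
        rintro ⟨hiSc, hiS⟩
        exact (Finset.mem_compl.mp hiSc) hiS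
      rw [hemp]
      simp
    · rw [if_neg hij]
      obtain ⟨k1, hk1⟩ : ∃ k1, n1 = k1 + 1 := ⟨n1 - 1, by omega⟩
      have hfc : P.filter (fun S => i ∈ Sᶜ ∧ j ∈ S) = P.filter (fun S => j ∈ S ∧ i ∉ S) :=
        Finset.filter_congr (fun S _ => by simp [and_comm])
      have hB1 := relB (n-1) k1 (by omega)
      have hA2 := relA n n1 (by omega) (by omega)
      rw [hk1] at hA2
      simp only [Nat.add_sub_cancel] at hA2
      rw [show n-1-1 = n-2 from by omega] at hB1
      rw [Nat.cast_sub (show 1 ≤ n by omega)] at hB1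
      rw [hfc, hP, hk1, card_filter_mem_not_mem Finset.univ j i (Finset.mem_univ j)
        (Finset.mem_univ i) (Ne.symm hij) k1, Finset.card_univ, Fintype.card_fin, hN, hk1,
        eq_div_iff (mul_ne_zero hNn hn1R)]
      push_cast at hB1 hA2 ⊢
      linear_combination (n:ℝ) * hB1 + ((n:ℝ) - 1 - (k1:ℝ)) * hA2
  have f00 : ∀ i j : Fin n, ((P.filter (fun S => i ∈ Sᶜ ∧ j ∈ Sᶜ)).card : ℝ)
      = if i = j then (↑n - ↑n1) * N / ↑n
        else (↑n - ↑n1) * ((↑n - ↑n1) - 1) * N / (↑n * (↑n - 1)) := by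
    intro i j
    by_cases hij : i = j
    · subst hij
      rw [if_pos rfl]
      have hfc : P.filter (fun S => i ∈ Sᶜ ∧ i ∈ Sᶜ) = P.filter (fun S => i ∈ Sᶜ) :=
        Finset.filter_congr (fun S _ => by simp)
      rw [hfc]
      exact f0 i
    · rw [if_neg hij]
      have hfc : P.filter (fun S => i ∈ Sᶜ ∧ j ∈ Sᶜ) = P.filter (fun S => i ∉ S ∧ j ∉ S) :=
        Finset.filter_congr (fun S _ => by simp)
      have hB1 := relB (n-1) n1 (by omega)
      have hB2 := relB n n1 (by omega)
      rw [show n-1-1 = n-2 from by omega] at hB1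
      rw [Nat.cast_sub (show 1 ≤ n by omega)] at hB1
      rw [hfc, hP, card_filter_not_mem_not_mem Finset.univ i j (Finset.mem_univ i)
        (Finset.mem_univ j) hij n1, Finset.card_univ, Fintype.card_fin, hN,
        eq_div_iff (mul_ne_zero hNn hn1R)]
      push_cast at hB1 hB2 ⊢
      linear_combination (n:ℝ) * hB1 + ((n:ℝ) - 1 - (n1:ℝ)) * hB2
  -- single-sum expansions
  have hs1 : ∀ a : Fin n → ℝ, ∑ S ∈ P, ∑ i ∈ S, a i = (↑n1 * N / ↑n) * ∑ i, a i := by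
    intro a
    refine (expand1 P (fun S => S) a).trans ?_
    simp only [f1]
    rw [← Finset.mul_sum]
  have hs0 : ∀ a : Fin n → ℝ, ∑ S ∈ P, ∑ i ∈ Sᶜ, a i = ((↑n - ↑n1) * N / ↑n) * ∑ i, a i := by
    intro a
    refine (expand1 P (fun S => Sᶜ) a).trans ?_
    simp only [f0]
    rw [← Finset.mul_sum]
  -- pair-sum expansions
  have T11 : ∑ S ∈ P, (∑ i ∈ S, Y1 i) * (∑ j ∈ S, D1 j)
      = (↑n1 * (↑n1 - 1) * N / (↑n * (↑n - 1))) * ((∑ i, Y1 i) * (∑ i, D1 i))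
        + (↑n1 * N / ↑n - ↑n1 * (↑n1 - 1) * N / (↑n * (↑n - 1))) * ∑ i, Y1 i * D1 i := by
    refine (expand2 P (fun S => S) (fun S => S) Y1 D1).trans ?_
    simp only [f11]
    exact diag_split Y1 D1 _ _
  have T10 : ∑ S ∈ P, (∑ i ∈ S, Y1 i) * (∑ j ∈ Sᶜ, D0 j)
      = (↑n1 * (↑n - ↑n1) * N / (↑n * (↑n - 1))) * ((∑ i, Y1 i) * (∑ i, D0 i))
        + (0 - ↑n1 * (↑n - ↑n1) * N / (↑n * (↑n - 1))) * ∑ i, Y1 i * D0 i := by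
    refine (expand2 P (fun S => S) (fun S => Sᶜ) Y1 D0).trans ?_
    simp only [f10]
    exact diag_split Y1 D0 _ _
  have T01 : ∑ S ∈ P, (∑ i ∈ Sᶜ, Y0 i) * (∑ j ∈ S, D1 j)
      = (↑n1 * (↑n - ↑n1) * N / (↑n * (↑n - 1))) * ((∑ i, Y0 i) * (∑ i, D1 i))
        + (0 - ↑n1 * (↑n - ↑n1) * N / (↑n * (↑n - 1))) * ∑ i, Y0 i * D1 i := by
    refine (expand2 P (fun S => Sᶜ) (fun S => S) Y0 D1).trans ?_
    simp only [f01]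
    exact diag_split Y0 D1 _ _
  have T00 : ∑ S ∈ P, (∑ i ∈ Sᶜ, Y0 i) * (∑ j ∈ Sᶜ, D0 j)
      = ((↑n - ↑n1) * ((↑n - ↑n1) - 1) * N / (↑n * (↑n - 1))) * ((∑ i, Y0 i) * (∑ i, D0 i))
        + ((↑n - ↑n1) * N / ↑n - (↑n - ↑n1) * ((↑n - ↑n1) - 1) * N / (↑n * (↑n - 1)))
            * ∑ i, Y0 i * D0 i := by
    refine (expand2 P (fun S => Sᶜ) (fun S => Sᶜ) Y0 D0).trans ?_
    simp only [f00]
    exact diag_split Y0 D0 _ _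
  -- sums of estimators
  have hSY : ∑ S ∈ P, dimEst n1 Y1 Y0 S
      = (1/(n1:ℝ)) * ((↑n1 * N / ↑n) * ∑ i, Y1 i)
        - (1/((n:ℝ)-↑n1)) * (((↑n - ↑n1) * N / ↑n) * ∑ i, Y0 i) := by
    simp only [dimEst, hm']
    rw [Finset.sum_sub_distrib, ← Finset.mul_sum, ← Finset.mul_sum, hs1, hs0]
  have hSD : ∑ S ∈ P, dimEst n1 D1 D0 S
      = (1/(n1:ℝ)) * ((↑n1 * N / ↑n) * ∑ i, D1 i)
        - (1/((n:ℝ)-↑n1)) * (((↑n - ↑n1) * N / ↑n) * ∑ i, D0 i) := by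
    simp only [dimEst, hm']
    rw [Finset.sum_sub_distrib, ← Finset.mul_sum, ← Finset.mul_sum, hs1, hs0]
  -- sum of products
  have hsplit : ∀ S ∈ P, dimEst n1 Y1 Y0 S * dimEst n1 D1 D0 S
      = (1/(n1:ℝ)) * ((1/(n1:ℝ)) * ((∑ i ∈ S, Y1 i) * (∑ j ∈ S, D1 j)))
        - (1/(n1:ℝ)) * ((1/((n:ℝ)-↑n1)) * ((∑ i ∈ S, Y1 i) * (∑ j ∈ Sᶜ, D0 j)))
        - (1/((n:ℝ)-↑n1)) * ((1/(n1:ℝ)) * ((∑ i ∈ Sᶜ, Y0 i) * (∑ j ∈ S, D1 j)))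
        + (1/((n:ℝ)-↑n1)) * ((1/((n:ℝ)-↑n1)) * ((∑ i ∈ Sᶜ, Y0 i) * (∑ j ∈ Sᶜ, D0 j))) := by
    intro S _
    simp only [dimEst, hm']
    ring
  have hSP : ∑ S ∈ P, dimEst n1 Y1 Y0 S * dimEst n1 D1 D0 S
      = (1/(n1:ℝ)) * ((1/(n1:ℝ)) * (∑ S ∈ P, (∑ i ∈ S, Y1 i) * (∑ j ∈ S, D1 j)))
        - (1/(n1:ℝ)) * ((1/((n:ℝ)-↑n1)) * (∑ S ∈ P, (∑ i ∈ S, Y1 i) * (∑ j ∈ Sᶜ, D0 j)))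
        - (1/((n:ℝ)-↑n1)) * ((1/(n1:ℝ)) * (∑ S ∈ P, (∑ i ∈ Sᶜ, Y0 i) * (∑ j ∈ S, D1 j)))
        + (1/((n:ℝ)-↑n1)) * ((1/((n:ℝ)-↑n1))
            * (∑ S ∈ P, (∑ i ∈ Sᶜ, Y0 i) * (∑ j ∈ Sᶜ, D0 j))) := by
    rw [Finset.sum_congr rfl hsplit, Finset.sum_add_distrib, Finset.sum_sub_distrib,
      Finset.sum_sub_distrib]
    simp only [← Finset.mul_sum]
  -- numerator expansion
  have hnum : ∑ S ∈ P, (dimEst n1 Y1 Y0 S - (∑ S ∈ P, dimEst n1 Y1 Y0 S) / N)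
        * (dimEst n1 D1 D0 S - (∑ S ∈ P, dimEst n1 D1 D0 S) / N)
      = (∑ S ∈ P, dimEst n1 Y1 Y0 S * dimEst n1 D1 D0 S)
        - ((∑ S ∈ P, dimEst n1 D1 D0 S) / N) * (∑ S ∈ P, dimEst n1 Y1 Y0 S)
        - ((∑ S ∈ P, dimEst n1 Y1 Y0 S) / N) * (∑ S ∈ P, dimEst n1 D1 D0 S)
        + (P.card : ℝ) * (((∑ S ∈ P, dimEst n1 Y1 Y0 S) / N)
            * ((∑ S ∈ P, dimEst n1 D1 D0 S) / N)) := by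
    have h : ∀ S ∈ P, (dimEst n1 Y1 Y0 S - (∑ S ∈ P, dimEst n1 Y1 Y0 S) / N)
          * (dimEst n1 D1 D0 S - (∑ S ∈ P, dimEst n1 D1 D0 S) / N)
        = dimEst n1 Y1 Y0 S * dimEst n1 D1 D0 S
          - ((∑ S ∈ P, dimEst n1 D1 D0 S) / N) * dimEst n1 Y1 Y0 S
          - ((∑ S ∈ P, dimEst n1 Y1 Y0 S) / N) * dimEst n1 D1 D0 S
          + ((∑ S ∈ P, dimEst n1 Y1 Y0 S) / N) * ((∑ S ∈ P, dimEst n1 D1 D0 S) / N) := by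
      intro S _; ring
    rw [Finset.sum_congr rfl h, Finset.sum_add_distrib, Finset.sum_sub_distrib,
      Finset.sum_sub_distrib, ← Finset.mul_sum, ← Finset.mul_sum, Finset.sum_const,
      nsmul_eq_mul]
  -- put it together
  have e1 : ∑ i, (Y1 i - Y0 i) = (∑ i, Y1 i) - ∑ i, Y0 i := Finset.sum_sub_distrib _ _
  have e2 : ∑ i, (D1 i - D0 i) = (∑ i, D1 i) - ∑ i, D0 i := Finset.sum_sub_distrib _ _
  have e3 : ∑ i, (Y1 i - Y0 i) * (D1 i - D0 i)
      = ∑ i, Y1 i * D1 i - ∑ i, Y1 i * D0 i - ∑ i, Y0 i * D1 i + ∑ i, Y0 i * D0 i := by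
    have h : ∀ i ∈ (Finset.univ : Finset (Fin n)), (Y1 i - Y0 i) * (D1 i - D0 i)
        = Y1 i * D1 i - Y1 i * D0 i - Y0 i * D1 i + Y0 i * D0 i := fun i _ => by ring
    rw [Finset.sum_congr rfl h, Finset.sum_add_distrib, Finset.sum_sub_distrib,
      Finset.sum_sub_distrib]
  rw [hnum, hSP, T11, T10, T01, T00, hSY, hSD, hcardP]
  simp only [fcov, fmean, hm']
  rw [fcov_aux hNn Y1 D1, fcov_aux hNn Y0 D0, fcov_aux hNn (fun i => Y1 i - Y0 i)
    (fun i => D1 i - D0 i)]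
  simp only [e1, e2, e3]
  field_simp
  ring
end
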